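/- The class of fighting fish is closed under augmentation and concatenation: if F is a fighting fish and 1 ≤ i ≤ jaw(F), then ✠_i(F) is a fighting fish; and if F1 and F2 are fighting fish, then F1 ⊙ F2 is a fighting fish. -/

import Mathlib

/-- The four-letter alphabet of steps. -/
inductive Letter : Type
  | E | N | W | S
deriving DecidableEq, Repr

open Letter

/-- Fighting fish: words obtainable from `ENWS` by upper, lower and double gluings. -/
inductive IsFF : List Letter → Prop
  | base : IsFF [E, N, W, S]
  | upper (u v : List Letter) :
      IsFF (u ++ [W] ++ v) → IsFF (u ++ [N, W, S] ++ v)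
  | lower (u v : List Letter) :
      IsFF (u ++ [N] ++ v) → IsFF (u ++ [E, N, W] ++ v)
  | double (u v : List Letter) :
      IsFF (u ++ [W, N] ++ v) → IsFF (u ++ [N, W] ++ v)

/-- Generalized fighting fish: words obtainable from the empty word by the
operations `∇_k` (replace `N^k` by `E N^k W`) and `△_k` (replace `W^k` by `N W^k S`),
for `k ≥ 0`. -/
inductive IsGFF : List Letter → Prop
  | base : IsGFF []
  | nabla (u v : List Letter) (k : ℕ) :
      IsGFF (u ++ List.replicate k N ++ v) →
      IsGFF (u ++ [E] ++ List.replicate k N ++ [W] ++ v)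
  | delta (u v : List Letter) (k : ℕ) :
      IsGFF (u ++ List.replicate k W ++ v) →
      IsGFF (u ++ [N] ++ List.replicate k W ++ [S] ++ v)

/-- The latitude of a word: number of `N`'s minus number of `S`'s. -/
def lat (w : List Letter) : ℤ := (w.count N : ℤ) - (w.count S : ℤ)

/-- The longitude of a word: number of `E`'s minus number of `W`'s. -/
def long (w : List Letter) : ℤ := (w.count E : ℤ) - (w.count W : ℤ)

/-- The size of a word: half its length. -/
def size (w : List Letter) : ℕ := w.length / 2

/-- The jaw of a word: the length of the maximal initial run of `E`'s. -/
def jaw (w : List Letter) : ℕ := (w.takeWhile (· == Letter.E)).length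

/-- The `i`-augmentation of a fighting fish `F = E^{jaw F} · G`:
`✠_i(F) = E^i · N · E^{jaw F − i} · G · S`. -/
def ffAug (w : List Letter) (i : ℕ) : List Letter :=
  List.replicate i Letter.E ++ [Letter.N] ++ List.replicate (jaw w - i) Letter.E ++
    w.drop (jaw w) ++ [Letter.S]

/-- The concatenation of fighting fish `F1 = E^{jaw F1} · N · R` and `F2 = G · S`:
`F1 ⊙ F2 = E^{jaw F1} · G · R`. -/
def ffConc (w1 w2 : List Letter) : List Letter :=
  List.replicate (jaw w1) Letter.E ++ w2.dropLast ++ w1.drop (jaw w1 + 1)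

/-!
Every fighting fish has the form `E^a N b` with `a ≥ 1` and ends with `S`.

For concatenation, induct on the derivation of `F₂ = G S`: substituting `G` for any `N` of a
fighting fish gives a fighting fish, since for `ENWS` this is a lower gluing and each gluing
inside `G` can be replayed after the substitution.

For augmentation, induct on the derivation of `F = E^a N b`: a gluing inside `b` commutes with
`✠_i`. The only other gluing is a lower gluing at the head `N`, which raises the jaw to `a + 1`;
then `✠_i` for `i ≤ a` is a lower gluing of the old `✠_i`, and `✠_{a+1}` is obtained from the
old `✠_a = E^a N N b S` by a lower gluing at its first `N` followed by a double gluing.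
-/

theorem List.append_cons_eq_replicate_append_cons {α : Type*} {c d e : α} (hc : c ≠ e) :
    ∀ {u v b : List α} {a : ℕ}, u ++ c :: v = List.replicate a e ++ d :: b →
      (∃ u', u = List.replicate a e ++ d :: u') ∨ (u = List.replicate a e ∧ c = d)
  | [], _, _, 0, h => .inr ⟨rfl, (List.cons.inj h).1⟩
  | [], _, _, _ + 1, h => absurd (List.cons.inj h).1 hc
  | x :: u, _, _, 0, h => .inl ⟨u, by simpa using (List.cons.inj h).1⟩
  | x :: u, _, _, a + 1, h => by
    obtain ⟨rfl, h⟩ := List.cons.inj h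
    rcases append_cons_eq_replicate_append_cons hc h with ⟨u', rfl⟩ | ⟨rfl, rfl⟩
    · exact .inl ⟨u', rfl⟩
    · exact .inr ⟨rfl, rfl⟩

theorem jaw_replicate_append_cons (a : ℕ) {c : Letter} (hc : c ≠ E) (b : List Letter) :
    jaw (List.replicate a E ++ c :: b) = a := by
  induction a with
  | zero => cases c <;> simp_all [jaw]
  | succ a ih => simpa [jaw, List.replicate_succ] using ih

theorem ffAug_replicate_append_cons (a i : ℕ) (b : List Letter) :
    ffAug (List.replicate a E ++ N :: b) i =
      List.replicate i E ++ N :: (List.replicate (a - i) E ++ N :: (b ++ [S])) := by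
  simp [ffAug, jaw_replicate_append_cons a (c := N) (by decide)]

theorem ffConc_replicate_append_cons (a : ℕ) (b F₂ : List Letter) :
    ffConc (List.replicate a E ++ N :: b) F₂ = List.replicate a E ++ F₂.dropLast ++ b := by
  simp [ffConc, jaw_replicate_append_cons a (c := N) (by decide), List.drop_append]

namespace IsFF

theorem getLast?_eq {F : List Letter} (h : IsFF F) : F.getLast? = some S := by
  induction h with
  | base => rfl
  | upper _ v _ ih | lower _ v _ ih | double _ v _ ih =>
    simp only [List.getLast?_append] at ih ⊢
    cases hv : v.getLast? <;> simp_all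

theorem exists_eq_replicate_append_cons {F : List Letter} (h : IsFF F) :
    ∃ a b, 1 ≤ a ∧ F = List.replicate a E ++ N :: b := by
  induction h with
  | base => exact ⟨1, [W, S], le_rfl, rfl⟩
  | upper u v _ ih =>
    obtain ⟨a, b, ha, hs⟩ := ih
    rcases List.append_cons_eq_replicate_append_cons (c := W) (e := E) (by decide)
      (by simpa using hs) with ⟨u', rfl⟩ | ⟨-, h⟩
    · exact ⟨a, u' ++ [N, W, S] ++ v, ha, by simp⟩
    · cases h
  | lower u v _ ih =>
    obtain ⟨a, b, ha, hs⟩ := ih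
    rcases List.append_cons_eq_replicate_append_cons (c := N) (e := E) (by decide)
      (by simpa using hs) with ⟨u', rfl⟩ | ⟨rfl, -⟩
    · exact ⟨a, u' ++ [E, N, W] ++ v, ha, by simp⟩
    · exact ⟨a + 1, W :: v, by omega, by simp [List.replicate_succ']⟩
  | double u v _ ih =>
    obtain ⟨a, b, ha, hs⟩ := ih
    rcases List.append_cons_eq_replicate_append_cons (c := W) (e := E) (v := N :: v)
      (by decide)
      (by simpa using hs) with ⟨u', rfl⟩ | ⟨-, h⟩
    · exact ⟨a, u' ++ [N, W] ++ v, ha, by simp⟩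
    · cases h

theorem gluing_dropLast {x y u v : List Letter} (hv : v ≠ [])
    (glue : ∀ u v, IsFF (u ++ x ++ v) → IsFF (u ++ y ++ v)) {P R : List Letter}
    (h : IsFF (P ++ (u ++ x ++ v).dropLast ++ R)) : IsFF (P ++ (u ++ y ++ v).dropLast ++ R) := by
  rw [List.dropLast_append_of_ne_nil hv] at h ⊢
  simpa using glue (P ++ u) (v.dropLast ++ R) (by simpa using h)

theorem replace_N_with_dropLast {F₂ : List Letter} (h : IsFF F₂) {P R : List Letter}
    (hPR : IsFF (P ++ N :: R)) : IsFF (P ++ F₂.dropLast ++ R) := by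
  induction h generalizing P R with
  | base => simpa using IsFF.lower P R (by simpa using hPR)
  | upper u v hs ih =>
    exact gluing_dropLast (by rintro rfl; simpa using hs.getLast?_eq) IsFF.upper (ih hPR)
  | lower u v hs ih =>
    exact gluing_dropLast (by rintro rfl; simpa using hs.getLast?_eq) IsFF.lower (ih hPR)
  | double u v hs ih =>
    exact gluing_dropLast (by rintro rfl; simpa using hs.getLast?_eq) IsFF.double (ih hPR)

end IsFF

def AugmentsToFF (F : List Letter) : Prop :=
  ∀ i, 1 ≤ i → i ≤ jaw F → IsFF (ffAug F i)

theorem augmentsToFF_replicate_append_cons_iff (a : ℕ) (b : List Letter) :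
    AugmentsToFF (List.replicate a E ++ N :: b) ↔ ∀ i, 1 ≤ i → i ≤ a →
      IsFF (List.replicate i E ++ N :: (List.replicate (a - i) E ++ N :: (b ++ [S]))) := by
  simp only [AugmentsToFF, jaw_replicate_append_cons a (c := N) (by decide),
    ffAug_replicate_append_cons]

theorem AugmentsToFF.gluing {x y : List Letter}
    (glue : ∀ u v, IsFF (u ++ x ++ v) → IsFF (u ++ y ++ v)) {a : ℕ} {u v : List Letter}
    (h : AugmentsToFF (List.replicate a E ++ N :: u ++ x ++ v)) :
    AugmentsToFF (List.replicate a E ++ N :: u ++ y ++ v) := by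
  have reassoc (z : List Letter) :
      List.replicate a E ++ N :: u ++ z ++ v = List.replicate a E ++ N :: (u ++ z ++ v) := by
    simp
  rw [reassoc, augmentsToFF_replicate_append_cons_iff] at h ⊢
  intro i hi₁ hi
  simpa using glue (List.replicate i E ++ N :: (List.replicate (a - i) E ++ N :: u)) (v ++ [S])
    (by simpa using h i hi₁ hi)

theorem AugmentsToFF.lower_head {a : ℕ} (ha : 1 ≤ a) {v : List Letter}
    (h : AugmentsToFF (List.replicate a E ++ [N] ++ v)) :
    AugmentsToFF (List.replicate a E ++ [E, N, W] ++ v) := by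
  rw [show List.replicate a E ++ [E, N, W] ++ v = List.replicate (a + 1) E ++ N :: W :: v by
    simp [List.replicate_succ']]
  rw [List.append_assoc, List.singleton_append, augmentsToFF_replicate_append_cons_iff] at h
  rw [augmentsToFF_replicate_append_cons_iff]
  intro i hi₁ hi
  rcases hi.lt_or_eq with hi | rfl
  · have := IsFF.lower (List.replicate i E ++ N :: List.replicate (a - i) E) (v ++ [S])
      (by simpa using h i hi₁ (by omega))
    rw [show a + 1 - i = a - i + 1 by omega, List.replicate_succ']
    simpa using this
  · have h₁ := IsFF.lower (List.replicate a E) (N :: v ++ [S]) (by simpa using h a ha le_rfl)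
    have h₂ := IsFF.double (List.replicate a E ++ [E, N]) (v ++ [S]) (by simpa using h₁)
    simpa [List.replicate_succ'] using h₂

theorem IsFF.augmentsToFF {F : List Letter} (h : IsFF F) : AugmentsToFF F := by
  induction h with
  | base =>
    intro i hi₁ hi
    obtain rfl : i = 1 := le_antisymm hi hi₁
    exact IsFF.upper [E, N] [S] IsFF.base
  | upper u v hs ih =>
    obtain ⟨a, b, -, hs⟩ := hs.exists_eq_replicate_append_cons
    rcases List.append_cons_eq_replicate_append_cons (c := W) (e := E) (by decide)
      (by simpa using hs) with ⟨u', rfl⟩ | ⟨-, h⟩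
    · exact ih.gluing IsFF.upper
    · cases h
  | lower u v hs ih =>
    obtain ⟨a, b, ha, hs⟩ := hs.exists_eq_replicate_append_cons
    rcases List.append_cons_eq_replicate_append_cons (c := N) (e := E) (by decide)
      (by simpa using hs) with ⟨u', rfl⟩ | ⟨rfl, -⟩
    · exact ih.gluing IsFF.lower
    · exact ih.lower_head ha
  | double u v hs ih =>
    obtain ⟨a, b, -, hs⟩ := hs.exists_eq_replicate_append_cons
    rcases List.append_cons_eq_replicate_append_cons (c := W) (e := E) (v := N :: v)
      (by decide) (by simpa using hs) with ⟨u', rfl⟩ | ⟨-, h⟩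
    · exact ih.gluing IsFF.double
    · cases h

/-- Fighting fish are closed under augmentation and concatenation: if `F` is a
fighting fish and `1 ≤ i ≤ jaw F` then `✠_i(F)` is a fighting fish, and if `F1`,
`F2` are fighting fish then `F1 ⊙ F2` is a fighting fish. -/
theorem ff_closure :
    (∀ (F : List Letter) (i : ℕ), IsFF F → 1 ≤ i → i ≤ jaw F → IsFF (ffAug F i)) ∧
    (∀ F1 F2 : List Letter, IsFF F1 → IsFF F2 → IsFF (ffConc F1 F2)) := by
  refine ⟨fun F i hF => hF.augmentsToFF i, fun F1 F2 h1 h2 => ?_⟩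
  obtain ⟨a, b, -, rfl⟩ := h1.exists_eq_replicate_append_cons
  rw [ffConc_replicate_append_cons]
  exact h2.replace_N_with_dropLast h1
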